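/- Let (X,d) be a δ-hyperbolic metric space (δ ≥ 0), let R be a natural number with R ≥ 8δ + 2, and let w, x₀, y₀, y' ∈ X satisfy: d(y₀, y') = R, d(x₀, y') ≤ d(x₀, y₀), d(w, y₀) ≤ ⌊R/2⌋ + 2δ + 1, and d(w, y') ≤ ⌊R/2⌋ + 2δ + 1. Then d(w, x₀) ≤ d(x₀, y₀). -/
import Mathlib

/-- A metric space is δ-hyperbolic if for all `x,y,z,t` one has
`d(x,y) + d(z,t) ≤ max (d(x,z) + d(y,t)) (d(x,t) + d(y,z)) + 2δ`. -/
def IsHyperbolicSpace (X : Type*) [MetricSpace X] (δ : ℝ) : Prop :=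
  ∀ x y z t : X, dist x y + dist z t ≤
    max (dist x z + dist y t) (dist x t + dist y z) + 2 * δ

/-- Lemma 4(b), metric form: if `R ≥ 8δ + 2`, `d(y₀,y') = R`, `y'` is no farther from `x₀`
than `y₀`, and `w` is within `⌊R/2⌋ + 2δ + 1` of both `y₀` and `y'`, then
`d(w,x₀) ≤ d(x₀,y₀)`. -/
theorem orbit_closer_than_farthest_point
    {X : Type*} [MetricSpace X] (δ : ℝ) (hδ : 0 ≤ δ)
    (hhyp : IsHyperbolicSpace X δ) (R : ℕ) (hR : (R : ℝ) ≥ 8 * δ + 2)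
    (w x₀ y₀ y' : X)
    (h1 : dist y₀ y' = R)
    (h2 : dist x₀ y' ≤ dist x₀ y₀)
    (h3 : dist w y₀ ≤ (R / 2 : ℕ) + 2 * δ + 1)
    (h4 : dist w y' ≤ (R / 2 : ℕ) + 2 * δ + 1) :
    dist w x₀ ≤ dist x₀ y₀ := by
  have key := hhyp w x₀ y₀ y'
  rw [h1] at key
  have hfloor : ((R / 2 : ℕ) : ℝ) ≤ (R : ℝ) / 2 := Nat.cast_div_le
  have hmax : max (dist w y₀ + dist x₀ y') (dist w y' + dist x₀ y₀) ≤
      ((R / 2 : ℕ) + 2 * δ + 1) + dist x₀ y₀ := by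
    apply max_le
    · linarith
    · linarith
  linarith
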